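/- Let P = νX.∏_{i∈I}A_i be a 𝒯-compatible annotated π-term in normal form. Then for every trace ((x₁,t₁)…(x_k,t_k) A_j) in the forest Φ_𝒯(P) and every i ∈ {1,…,k}, the name x_i is tied to A_j in P. -/

import Mathlib

open Relation

namespace PiCalc

abbrev Name := ℕ

/-- Types over a forest `T` of base types: `τ ::= t | t[τ]`. -/
inductive Ty (T : Type) : Type where
  | base : T → Ty T
  | chan : T → Ty T → Ty T

def Ty.baseOf {T : Type} : Ty T → T
  | .base t => t
  | .chan t _ => t

/-- Annotated π-calculus processes with guarded replication. -/
inductive Proc (T : Type) : Type where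
  | nil  : Proc T
  | nu   : Name → Ty T → Proc T → Proc T
  | par  : Proc T → Proc T → Proc T
  | sum  : Proc T → Proc T → Proc T
  | inp  : Name → Name → Proc T → Proc T
  | out  : Name → Name → Proc T → Proc T
  | tau  : Proc T → Proc T
  | repl : Proc T → Proc T

namespace Proc

variable {T : Type}

/-- free names -/
def fn : Proc T → Finset Name
  | .nil => ∅
  | .nu x _ P => P.fn.erase x
  | .par P Q => P.fn ∪ Q.fn
  | .sum P Q => P.fn ∪ Q.fn
  | .inp a x P => insert a (P.fn.erase x)
  | .out a b P => insert a (insert b P.fn)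
  | .tau P => P.fn
  | .repl P => P.fn

/-- the list of all bound names (with multiplicity) -/
def bnList : Proc T → List Name
  | .nil => []
  | .nu x _ P => x :: P.bnList
  | .par P Q => P.bnList ++ Q.bnList
  | .sum P Q => P.bnList ++ Q.bnList
  | .inp _ x P => x :: P.bnList
  | .out _ _ P => P.bnList
  | .tau P => P.bnList
  | .repl P => P.bnList

/-- all restriction binders occurring in the term, with their annotations -/
def bnNuList : Proc T → List (Name × Ty T)
  | .nil => []
  | .nu x τ P => (x, τ) :: P.bnNuList
  | .par P Q => P.bnNuList ++ Q.bnNuList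
  | .sum P Q => P.bnNuList ++ Q.bnNuList
  | .inp _ _ P => P.bnNuList
  | .out _ _ P => P.bnNuList
  | .tau P => P.bnNuList
  | .repl P => P.bnNuList

/-- substitute `b` for the free occurrences of `a` -/
def subst : Proc T → Name → Name → Proc T
  | .nil, _, _ => .nil
  | .nu x τ P, a, b => if x = a then .nu x τ P else .nu x τ (P.subst a b)
  | .par P Q, a, b => .par (P.subst a b) (Q.subst a b)
  | .sum P Q, a, b => .sum (P.subst a b) (Q.subst a b)
  | .inp c x P, a, b =>
      .inp (if c = a then b else c) x (if x = a then P else P.subst a b)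
  | .out c d P, a, b =>
      .out (if c = a then b else c) (if d = a then b else d) (P.subst a b)
  | .tau P, a, b => .tau (P.subst a b)
  | .repl P, a, b => .repl (P.subst a b)

/-- simultaneous substitution of free names -/
def msubst (σ : Name → Name) : Proc T → Proc T
  | .nil => .nil
  | .nu x τ P => .nu x τ (P.msubst (Function.update σ x x))
  | .par P Q => .par (P.msubst σ) (Q.msubst σ)
  | .sum P Q => .sum (P.msubst σ) (Q.msubst σ)
  | .inp a x P => .inp (σ a) x (P.msubst (Function.update σ x x))
  | .out a b P => .out (σ a) (σ b) (P.msubst σ)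
  | .tau P => .tau (P.msubst σ)
  | .repl P => .repl (P.msubst σ)

/-- the active sequential subterms of a term -/
def activeSeq : Proc T → List (Proc T)
  | .nil => []
  | .nu _ _ P => P.activeSeq
  | .par P Q => P.activeSeq ++ Q.activeSeq
  | P => [P]

/-- the derivatives: all sequential subterms, active or not -/
def der : Proc T → List (Proc T)
  | .nil => []
  | .nu _ _ P => P.der
  | .par P Q => P.der ++ Q.der
  | .sum M M' => .sum M M' :: (M.der ++ M'.der)
  | .inp a x P => .inp a x P :: P.der
  | .out a b P => .out a b P :: P.der
  | .tau P => .tau P :: P.der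
  | .repl M => .repl M :: M.der

end Proc

/-- Structural congruence. -/
inductive Cong {T : Type} : Proc T → Proc T → Prop where
  | refl (P : Proc T) : Cong P P
  | symm : Cong P Q → Cong Q P
  | trans : Cong P Q → Cong Q R → Cong P R
  | nu_congr (x : Name) (τ : Ty T) : Cong P Q → Cong (.nu x τ P) (.nu x τ Q)
  | par_congr : Cong P P' → Cong Q Q' → Cong (.par P Q) (.par P' Q')
  | sum_congr : Cong P P' → Cong Q Q' → Cong (.sum P Q) (.sum P' Q')
  | inp_congr (a x : Name) : Cong P Q → Cong (.inp a x P) (.inp a x Q)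
  | out_congr (a b : Name) : Cong P Q → Cong (.out a b P) (.out a b Q)
  | tau_congr : Cong P Q → Cong (.tau P) (.tau Q)
  | repl_congr : Cong P Q → Cong (.repl P) (.repl Q)
  | alpha_nu (x y : Name) (τ : Ty T) (P : Proc T) :
      y ∉ P.fn → y ∉ P.bnList → Cong (.nu x τ P) (.nu y τ (P.subst x y))
  | alpha_inp (a x y : Name) (P : Proc T) :
      y ∉ P.fn → y ∉ P.bnList → Cong (.inp a x P) (.inp a y (P.subst x y))
  | par_comm (P Q : Proc T) : Cong (.par P Q) (.par Q P)
  | par_assoc (P Q R : Proc T) : Cong (.par (.par P Q) R) (.par P (.par Q R))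
  | par_nil (P : Proc T) : Cong (.par P .nil) P
  | sum_comm (P Q : Proc T) : Cong (.sum P Q) (.sum Q P)
  | sum_assoc (P Q R : Proc T) : Cong (.sum (.sum P Q) R) (.sum P (.sum Q R))
  | sum_nil (P : Proc T) : Cong (.sum P .nil) P
  | nu_nil (x : Name) (τ : Ty T) : Cong (.nu x τ .nil) .nil
  | nu_swap (x y : Name) (τ σ : Ty T) (P : Proc T) :
      Cong (.nu x τ (.nu y σ P)) (.nu y σ (.nu x τ P))
  | repl_nil : Cong (.repl .nil) (.nil : Proc T)
  | repl_unfold (M : Proc T) : Cong (.repl M) (.par M (.repl M))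
  | extrude (x : Name) (τ : Ty T) (P Q : Proc T) :
      x ∉ P.fn → Cong (.par P (.nu x τ Q)) (.nu x τ (.par P Q))

/-- α-congruence: the congruence generated by α-conversion only. -/
inductive Alpha {T : Type} : Proc T → Proc T → Prop where
  | refl (P : Proc T) : Alpha P P
  | symm : Alpha P Q → Alpha Q P
  | trans : Alpha P Q → Alpha Q R → Alpha P R
  | nu_congr (x : Name) (τ : Ty T) : Alpha P Q → Alpha (.nu x τ P) (.nu x τ Q)
  | par_congr : Alpha P P' → Alpha Q Q' → Alpha (.par P Q) (.par P' Q')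
  | sum_congr : Alpha P P' → Alpha Q Q' → Alpha (.sum P Q) (.sum P' Q')
  | inp_congr (a x : Name) : Alpha P Q → Alpha (.inp a x P) (.inp a x Q)
  | out_congr (a b : Name) : Alpha P Q → Alpha (.out a b P) (.out a b Q)
  | tau_congr : Alpha P Q → Alpha (.tau P) (.tau Q)
  | repl_congr : Alpha P Q → Alpha (.repl P) (.repl Q)
  | alpha_nu (x y : Name) (τ : Ty T) (P : Proc T) :
      y ∉ P.fn → y ∉ P.bnList → Alpha (.nu x τ P) (.nu y τ (P.subst x y))
  | alpha_inp (a x y : Name) (P : Proc T) :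
      y ∉ P.fn → y ∉ P.bnList → Alpha (.inp a x P) (.inp a y (P.subst x y))

mutual
  /-- choices in normal form: sums of prefixed normal forms -/
  inductive NFChoice {T : Type} : Proc T → Prop where
    | inp : NF P → NFChoice (.inp a x P)
    | out : NF P → NFChoice (.out a b P)
    | tau : NF P → NFChoice (.tau P)
    | sum : NFChoice M → NFChoice M' → NFChoice (.sum M M')

  /-- parallel compositions of normal-form sequential terms -/
  inductive NFPar {T : Type} : Proc T → Prop where
    | choice : NFChoice A → NFPar A
    | repl : NFChoice A → NFPar (.repl A)
    | par : NFPar P → NFPar Q → NFPar (.par P Q)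

  /-- normal forms: ν x₁ … ν xₙ . (A₁ ‖ … ‖ A_m) -/
  inductive NF {T : Type} : Proc T → Prop where
    | nil : NF (.nil : Proc T)
    | par : NFPar P → NF P
    | nu (x : Name) (τ : Ty T) : NF P → P ≠ .nil → NF (.nu x τ P)
end

/-- name uniqueness: every name bound at most once, free and bound names disjoint -/
def NameUniq {T : Type} (P : Proc T) : Prop :=
  P.bnList.Nodup ∧ ∀ x ∈ P.bnList, x ∉ P.fn

/-- normal forms are assumed (wlog) to satisfy name uniqueness -/
def NormalForm {T : Type} (P : Proc T) : Prop := NF P ∧ NameUniq P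

/-- ν-prefixing by a list of annotated restrictions -/
def nuList {T : Type} (X : List (Name × Ty T)) (P : Proc T) : Proc T :=
  X.foldr (fun xτ Q => .nu xτ.1 xτ.2 Q) P

/-- parallel composition of a list of terms (`0` if empty) -/
def parList {T : Type} : List (Proc T) → Proc T
  | [] => .nil
  | [A] => A
  | A :: As => .par A (parList As)

/-- `A` occurs as a summand of the choice `M` -/
inductive Summand {T : Type} : Proc T → Proc T → Prop where
  | refl (A : Proc T) : Summand A A
  | left : Summand A M → Summand A (.sum M M')
  | right : Summand A M' → Summand A (.sum M M')

/-- Reduction semantics of the π-calculus (Definition 2.1). -/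
inductive Reduces {T : Type} : Proc T → Proc T → Prop where
  | comm (P Q S R : Proc T) (Cs : List (Proc T)) (W Ys Yr : List (Name × Ty T))
      (a b x : Name) (S' R' : Proc T) :
      Cong P (nuList W (parList (S :: R :: Cs))) →
      NormalForm (nuList W (parList (S :: R :: Cs))) →
      Summand (.out a b (nuList Ys S')) S →
      Summand (.inp a x (nuList Yr R')) R →
      Cong Q (nuList (W ++ Ys ++ Yr) (parList (S' :: R'.subst x b :: Cs))) →
      Reduces P Q
  | tauStep (P Q : Proc T) (Cs : List (Proc T)) (W Y : List (Name × Ty T)) (P' : Proc T) :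
      Cong P (nuList W (parList (.tau (nuList Y P') :: Cs))) →
      NormalForm (nuList W (parList (.tau (nuList Y P') :: Cs))) →
      Cong Q (nuList (W ++ Y) (parList (P' :: Cs))) →
      Reduces P Q

/-- reachable terms -/
def Reach {T : Type} (P : Proc T) : Set (Proc T) :=
  {Q | Relation.ReflTransGen Reduces P Q}

/-- nesting of restrictions -/
def nestNu {T : Type} : Proc T → ℕ
  | .nu _ _ P => nestNu P + 1
  | .par P Q => max (nestNu P) (nestNu Q)
  | _ => 0

/-- depth: the minimal nesting of restrictions in the congruence class -/
noncomputable def depth {T : Type} (P : Proc T) : ℕ :=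
  sInf {n | ∃ Q, Cong Q P ∧ nestNu Q = n}

def DepthBounded {T : Type} (P : Proc T) : Prop :=
  ∃ k, ∀ Q ∈ Reach P, depth Q ≤ k

/-! ## Labelled forests -/

inductive LTree (L : Type) : Type where
  | node : L → List (LTree L) → LTree L

abbrev LForest (L : Type) := List (LTree L)

/-- isomorphism of labelled trees -/
inductive TreeEquiv {L : Type} : LTree L → LTree L → Prop where
  | node (l : L) (cs cs' : List (LTree L)) (σ : Fin cs.length ≃ Fin cs'.length)
      (h : ∀ i, TreeEquiv (cs.get i) (cs'.get (σ i))) :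
      TreeEquiv (.node l cs) (.node l cs')

/-- isomorphism of labelled forests -/
def ForestEquiv {L : Type} (φ φ' : LForest L) : Prop :=
  ∃ σ : Fin φ.length ≃ Fin φ'.length, ∀ i, TreeEquiv (φ.get i) (φ'.get (σ i))

/-- paths starting at the root of a tree, as label sequences -/
inductive RootPath {L : Type} : LTree L → List L → Prop where
  | single (l : L) (cs : List (LTree L)) : RootPath (.node l cs) [l]
  | cons {t : LTree L} {p : List L} (l : L) (cs : List (LTree L)) :
      t ∈ cs → RootPath t p → RootPath (.node l cs) (l :: p)

/-- `Subtree s t`: `s` is a subtree of `t` -/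
inductive Subtree {L : Type} : LTree L → LTree L → Prop where
  | refl (t : LTree L) : Subtree t t
  | child {s t : LTree L} (l : L) (cs : List (LTree L)) :
      t ∈ cs → Subtree s t → Subtree s (.node l cs)

def InForest {L : Type} (φ : LForest L) (s : LTree L) : Prop :=
  ∃ t ∈ φ, Subtree s t

/-- traces of (arbitrary) paths of the forest -/
def IsTrace {L : Type} (φ : LForest L) (p : List L) : Prop :=
  ∃ s, InForest φ s ∧ RootPath s p

/-- traces of paths starting at a root of the forest -/
def IsRootTrace {L : Type} (φ : LForest L) (p : List L) : Prop :=
  ∃ t ∈ φ, RootPath t p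

/-- labels in the forest representation of annotated terms: `(x, base τ)` or a sequential term -/
abbrev FLabel (T : Type) := (Name × T) ⊕ Proc T

/-- the forest of an annotated term -/
def forestOf {T : Type} : Proc T → LForest (FLabel T)
  | .nil => []
  | .nu x τ P => [.node (.inl (x, τ.baseOf)) (forestOf P)]
  | .par P Q => forestOf P ++ forestOf Q
  | P => [.node (.inr P) []]

/-- the forest representation of the congruence class of `P` (up to isomorphism) -/
def Fsem {T : Type} (P : Proc T) : Set (LForest (FLabel T)) :=
  {φ | ∃ Q, Cong Q P ∧ ForestEquiv φ (forestOf Q)}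

/-- 𝒯-compatibility of a labelled forest w.r.t. the strict order `lt` on base types -/
def TCompatForest {T : Type} (lt : T → T → Prop) (φ : LForest (FLabel T)) : Prop :=
  ∀ (xs : List (Name × T)) (A : Proc T),
    IsTrace φ (xs.map Sum.inl ++ [Sum.inr A]) →
    (xs.map Prod.snd).Chain' lt

/-- a term is 𝒯-compatible if some forest in `Fsem P` is -/
def TCompat {T : Type} (lt : T → T → Prop) (P : Proc T) : Prop :=
  ∃ φ ∈ Fsem P, TCompatForest lt φ

inductive Subterm {T : Type} : Proc T → Proc T → Prop where
  | refl (P : Proc T) : Subterm P P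
  | nu (x : Name) (τ : Ty T) : Subterm S P → Subterm S (.nu x τ P)
  | par_left : Subterm S P → Subterm S (.par P Q)
  | par_right : Subterm S Q → Subterm S (.par P Q)
  | sum_left : Subterm S P → Subterm S (.sum P Q)
  | sum_right : Subterm S Q → Subterm S (.sum P Q)
  | inp (a x : Name) : Subterm S P → Subterm S (.inp a x P)
  | out (a b : Name) : Subterm S P → Subterm S (.out a b P)
  | tau : Subterm S P → Subterm S (.tau P)
  | repl : Subterm S P → Subterm S (.repl P)

/-- a term is 𝒯-shaped if all its subterms are 𝒯-compatible -/
def TShaped {T : Type} (lt : T → T → Prop) (P : Proc T) : Prop :=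
  ∀ S, Subterm S P → TCompat lt S

/-! ## The tied-to relation -/

def fnAt {T : Type} (As : List (Proc T)) (i : ℕ) : Finset Name := (As.getD i .nil).fn

def namesOf {T : Type} (X : List (Name × Ty T)) : List Name := X.map Prod.fst

/-- `A_i` is linked to `A_j` in `νX.∏ As` -/
def Linked {T : Type} (X : List (Name × Ty T)) (As : List (Proc T)) (i j : ℕ) : Prop :=
  i < As.length ∧ j < As.length ∧
  ∃ y, y ∈ fnAt As i ∧ y ∈ fnAt As j ∧ y ∈ namesOf X

/-- `A_i` is tied to `A_j` in `νX.∏ As` -/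
def Tied {T : Type} (X : List (Name × Ty T)) (As : List (Proc T)) : ℕ → ℕ → Prop :=
  Relation.TransGen (Linked X As)

/-- the name `y` is tied to `A_i` in `νX.∏ As` -/
def NameTied {T : Type} (X : List (Name × Ty T)) (As : List (Proc T))
    (y : Name) (i : ℕ) : Prop :=
  ∃ j, y ∈ fnAt As j ∧ Tied X As j i

/-! ## The forest of base types and the type system -/

/-- `step` is the parent relation of a forest -/
def IsForestRel {T : Type} (step : T → T → Prop) : Prop :=
  (∀ a b c, step a c → step b c → a = b) ∧ ∀ t, ¬ Relation.TransGen step t t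

/-- the strict order `<` on base types -/
def blt {T : Type} (step : T → T → Prop) : T → T → Prop := Relation.TransGen step

/-- the order `≤` on base types -/
def ble {T : Type} (step : T → T → Prop) : T → T → Prop := Relation.ReflTransGen step

def Env (T : Type) := Name → Option (Ty T)

def extendEnv {T : Type} (Γ : Env T) (X : List (Name × Ty T)) : Env T :=
  fun y => match X.find? (fun p => p.1 == y) with
    | some p => some p.2
    | none => Γ y

/-- The type system of Figure 4. -/
inductive Types {T : Type} (step : T → T → Prop) : Env T → Proc T → Prop where
  | par (Γ : Env T) (X : List (Name × Ty T)) (As : List (Proc T)) :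
      (∀ A ∈ As, Types step (extendEnv Γ X) A) →
      (∀ i, i < As.length → ∀ xτ ∈ X, NameTied X As xτ.1 i →
        ∀ y ∈ fnAt As i, ∀ τy, Γ y = some τy →
          blt step τy.baseOf xτ.2.baseOf) →
      Types step Γ (nuList X (parList As))
  | sum (Γ : Env T) : Types step Γ M → Types step Γ M' → Types step Γ (.sum M M')
  | repl (Γ : Env T) : Types step Γ A → Types step Γ (.repl A)
  | tau (Γ : Env T) : Types step Γ A → Types step Γ (.tau A)
  | out (Γ : Env T) (a b : Name) (ta : T) (τb : Ty T) (Q : Proc T) :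
      Γ a = some (.chan ta τb) → Γ b = some τb → Types step Γ Q →
      Types step Γ (.out a b Q)
  | inp (Γ : Env T) (a x : Name) (ta : T) (τx : Ty T)
      (X : List (Name × Ty T)) (As : List (Proc T)) :
      Γ a = some (.chan ta τx) →
      Types step (extendEnv Γ [(x, τx)]) (nuList X (parList As)) →
      (ble step τx.baseOf ta ∨
        (∀ i, i < As.length → NameTied X As x i →
          ∀ y ∈ fnAt As i, y ≠ a → ∀ τy, Γ y = some τy →
            blt step τy.baseOf ta)) →
      Types step Γ (.inp a x (nuList X (parList As)))

/-- `Γ` is `P`-safe -/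
def PSafe {T : Type} (step : T → T → Prop) (Γ : Env T) (P : Proc T) : Prop :=
  ∀ x ∈ P.fn, ∀ τx, Γ x = some τx →
    ∀ yτ ∈ P.bnNuList, blt step τx.baseOf yτ.2.baseOf

/-- typably hierarchical terms -/
def TypablyHierarchical {T : Type} (step : T → T → Prop) (P : Proc T) : Prop :=
  ∃ N, NormalForm N ∧ Cong N P ∧ TShaped (blt step) N ∧
    ∃ Γ : Env T, PSafe step Γ N ∧ Types step Γ N


/-! ## The function Φ of Figure 2 -/

open scoped Classical in
/-- the assignments in `X` whose base type is minimal w.r.t. `<` -/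
noncomputable def minT {T : Type} (step : T → T → Prop)
    (X : List (Name × Ty T)) : List (Name × Ty T) :=
  X.filter (fun xτ => decide (∀ yτ ∈ X, ¬ blt step yτ.2.baseOf xτ.2.baseOf))

open scoped Classical in
/-- fuelled version of the function Φ of Figure 2; with `fuel ≥ X.length`
(and 𝒯 a forest) the fuel never runs out -/
noncomputable def PhiAux {T : Type} (step : T → T → Prop) :
    ℕ → List (Name × Ty T) → List (Proc T) → LForest (FLabel T)
  | 0, _, As => As.map (fun A => .node (.inr A) [])
  | fuel+1, X, As =>
    if X.isEmpty then As.map (fun A => .node (.inr A) []) else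
      let m := minT step X
      let Ix : (Name × Ty T) → List ℕ := fun xτ =>
        (List.range As.length).filter (fun i => decide (NameTied X As xτ.1 i))
      let Yx : (Name × Ty T) → List (Name × Ty T) := fun xτ =>
        X.filter (fun yτ => decide ((∃ i ∈ Ix xτ, yτ.1 ∈ fnAt As i) ∧ yτ ∉ m))
      let R : List ℕ :=
        (List.range As.length).filter
          (fun i => decide (∀ xτ ∈ m, ¬ NameTied X As xτ.1 i))
      let Z : List (Name × Ty T) :=
        X.filter (fun yτ => decide (yτ ∉ m ∧ ∀ xτ ∈ m, yτ ∉ Yx xτ))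
      (m.map (fun xτ =>
        LTree.node (.inl (xτ.1, xτ.2.baseOf))
          (PhiAux step fuel (Yx xτ) ((Ix xτ).map (fun i => As.getD i .nil)))))
      ++ PhiAux step fuel Z (R.map (fun i => As.getD i .nil))

/-- the function `Φ_𝒯` of Figure 2, applied to `νX.∏ As` -/
noncomputable def Phi {T : Type} (step : T → T → Prop)
    (X : List (Name × Ty T)) (As : List (Proc T)) : LForest (FLabel T) :=
  PhiAux step X.length X As

/-! ## Miscellaneous helpers -/

/-- the labels of a tree -/
def treeLabels {L : Type} : LTree L → List L
  | .node l cs => l :: (cs.attach.map (fun t => treeLabels t.1)).flatten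
decreasing_by
  have := List.sizeOf_lt_of_mem t.2
  simp only [LTree.node.sizeOf_spec]
  omega

/-- the labels of a forest -/
def forestLabels {L : Type} (φ : LForest L) : List L := (φ.map treeLabels).flatten

/-- forest labels keeping the full type annotation on names -/
abbrev FLabelA (T : Type) := (Name × Ty T) ⊕ Proc T

/-- the forest of a term, keeping full annotations on name labels -/
def forestOfA {T : Type} : Proc T → LForest (FLabelA T)
  | .nil => []
  | .nu x τ P => [.node (.inl (x, τ)) (forestOfA P)]
  | .par P Q => forestOfA P ++ forestOfA Q
  | P => [.node (.inr P) []]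

/-- union of two (disjoint) environments -/
def envUnion {T : Type} (Γ Γ' : Env T) : Env T :=
  fun y => match Γ y with
    | some τ => some τ
    | none => Γ' y

/-- `Deriv_P` relative to the choice `χ` of one name per base type -/
def DerivSet {T : Type} (χ : T → Name) (P : Proc T) : Set (Proc T) :=
  {Q' | ∃ Q ∈ P.der, ∃ σ : Name → Name,
    (∀ y ∈ Q.fn, σ y ∈ Set.range χ ∪ (P.fn : Set Name)) ∧ Q' = Q.msubst σ}

/-! ## Nested data class memory automata and their π-calculus encoding -/

namespace NDCMA

/-- a transition of a nested data class memory automaton with states `Fin m`: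
`(src, tested, dst, written)` -/
structure Trans (m : ℕ) where
  src : Fin m
  tested : List (Option (Fin m))
  dst : Fin m
  written : List (Fin m)

/-- Class memory functions over the canonical nested dataset whose level-`i`
data values are the lists of naturals of length `i`, with `pred` taking
prefixes (`⊥` is `none`). -/
abbrev CMF (m : ℕ) := List ℕ → Option (Fin m)

/-- one step of the automaton -/
def AStep {m : ℕ} (δ : List (Trans m)) :
    (Fin m × CMF m) → (Fin m × CMF m) → Prop :=
  fun c c' => ∃ tr ∈ δ, ∃ d : List ℕ,
    d.length = tr.tested.length ∧
    c.1 = tr.src ∧ c'.1 = tr.dst ∧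
    (∀ j (hj : j < tr.tested.length), c.2 (d.take (j+1)) = tr.tested.get ⟨j, hj⟩) ∧
    (∀ j (hj : j < tr.written.length),
      c'.2 (d.take (j+1)) = some (tr.written.get ⟨j, hj⟩)) ∧
    (∀ l : List ℕ, (∀ j < tr.tested.length, l ≠ d.take (j+1)) → c'.2 l = c.2 l)

/-- the type of the payload-free channels -/
def TyU : Ty Unit := .chan () (.base ())

/-- the channel `c^i_q` -/
def ch {m : ℕ} (i : ℕ) (q : Fin m) : Name := 2 + Nat.pair i q.val

/-- payload-free input -/
def recv (c : Name) (P : Proc Unit) : Proc Unit := .inp c 0 P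

/-- payload-free output (with nil continuation) -/
def send (c : Name) : Proc Unit := .out c 1 .nil

/-- the restrictions `ν𝒞^i` -/
def Cset (m i : ℕ) : List (Name × Ty Unit) :=
  (List.finRange m).map (fun q => (ch i q, TyU))

/-- the transitions in `θ_j`: those testing exactly `j` non-fresh data values -/
def theta {m : ℕ} (δ : List (Trans m)) (j : ℕ) : List (Trans m) :=
  δ.filter (fun tr => (tr.tested.takeWhile Option.isSome).length == j)

/-- the term `A_tr`, parametric in the encoding `Pθ` of the lower levels -/
def Atr {m : ℕ} (Pθ : ℕ → Proc Unit) (tr : Trans m) : Proc Unit :=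
  let j := (tr.tested.takeWhile Option.isSome).length
  let i := tr.tested.length
  let testedQs : List (Fin m) := tr.tested.reduceOption
  let inputs : List Name :=
    ch 0 tr.src :: List.zipWith (fun k q => ch k q) (List.range' 1 j) testedQs
  let restr : List (Name × Ty Unit) :=
    ((List.range' (j+1) (i - j)).map (fun k => Cset m k)).flatten
  let outs : List (Proc Unit) :=
    send (ch 0 tr.dst) ::
      List.zipWith (fun k q => send (ch k q)) (List.range' 1 i) tr.written
  let conts : List (Proc Unit) := (List.range' (j+1) (i - j)).map Pθ
  inputs.foldr (fun c P => recv c P) (nuList restr (parList (outs ++ conts)))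

/-- the terms `P_{θ_j}` (with fuel; `fuel = ℓ+1` suffices for level-`ℓ` automata) -/
def Ptheta {m : ℕ} (δ : List (Trans m)) : ℕ → ℕ → Proc Unit
  | 0, _ => .nil
  | fuel+1, j =>
      parList ((theta δ j).map (fun tr => .repl (Atr (fun k => Ptheta δ fuel k) tr)))

/-- the π-term encoding `P⟦𝒜⟧` of a level-`ℓ` NDCMA -/
def encode {m : ℕ} (ℓ : ℕ) (δ : List (Trans m)) (q0 : Fin m) : Proc Unit :=
  nuList (Cset m 0) (parList [Ptheta δ (ℓ+1) 0, send (ch 0 q0)])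

/-- terms of the form `ν𝒞⁰.(c̄ ‖ P')` with `c ∈ 𝒞⁰` -/
def Zform (m : ℕ) (P : Proc Unit) : Prop :=
  ∃ (q : Fin m) (P' : Proc Unit),
    Cong P (nuList (Cset m 0) (.par (send (ch 0 q)) P'))

/-- the derived transition relation `⟹` -/
def DStep (m : ℕ) (P Q : Proc Unit) : Prop :=
  Zform m P ∧ Zform m Q ∧
  ∃ (n : ℕ) (R : ℕ → Proc Unit), R 0 = P ∧ R n = Q ∧ 1 ≤ n ∧
    (∀ k < n, Reduces (R k) (R (k+1))) ∧
    (∀ k, 0 < k → k < n → ¬ Zform m (R k))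

end NDCMA

/-!
Induction along the recursion of `Φ_𝒯`. The root `x` of a tree
`(x, t)[Φ_𝒯(νY_x.∏_{i ∈ I_x} A_i)]` is tied to every `A_i` below it by the very choice of `I_x`,
and a name tied to a leaf in a subterm `νY.∏_{i ∈ I} A_i` with `Y ⊆ X` stays tied to it in
`νX.∏ As`, because links in the subterm are witnessed by the same names in the same terms.
-/

section Forest

variable {L : Type}

theorem isTrace_iff_exists_mem {φ : LForest L} {p : List L} :
    IsTrace φ p ↔ ∃ t ∈ φ, IsTrace [t] p := by
  constructor
  · rintro ⟨s, ⟨t, ht, hst⟩, hp⟩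
    exact ⟨t, ht, s, ⟨t, List.mem_singleton_self t, hst⟩, hp⟩
  · rintro ⟨t, ht, s, ⟨t', ht', hst⟩, hp⟩
    rw [List.mem_singleton.1 ht'] at hst
    exact ⟨s, ⟨t, ht, hst⟩, hp⟩

theorem isTrace_append {φ ψ : LForest L} {p : List L} :
    IsTrace (φ ++ ψ) p ↔ IsTrace φ p ∨ IsTrace ψ p := by
  simp only [isTrace_iff_exists_mem (φ := φ ++ ψ), isTrace_iff_exists_mem (φ := φ),
    isTrace_iff_exists_mem (φ := ψ), List.mem_append, or_and_right, exists_or]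

theorem IsRootTrace.isTrace {φ : LForest L} {p : List L} (h : IsRootTrace φ p) :
    IsTrace φ p :=
  let ⟨t, ht, hp⟩ := h
  ⟨t, ⟨t, ht, .refl t⟩, hp⟩

theorem not_isTrace_nil (p : List L) : ¬ IsTrace [] p :=
  fun ⟨_, ⟨_, ht, _⟩, _⟩ => List.not_mem_nil ht

theorem not_isRootTrace_nil (p : List L) : ¬ IsRootTrace [] p :=
  fun h => not_isTrace_nil p h.isTrace

theorem isTrace_node {l : L} {cs : LForest L} {p : List L} :
    IsTrace [.node l cs] p ↔
      p = [l] ∨ (∃ p', p = l :: p' ∧ IsRootTrace cs p') ∨ IsTrace cs p := by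
  constructor
  · rintro ⟨s, ⟨t, ht, hst⟩, hp⟩
    rw [List.mem_singleton.1 ht] at hst
    cases hst with
    | refl =>
      cases hp with
      | single => exact .inl rfl
      | cons _ _ hc hp' => exact .inr (.inl ⟨_, rfl, _, hc, hp'⟩)
    | child _ _ hc hsc => exact .inr (.inr ⟨s, ⟨_, hc, hsc⟩, hp⟩)
  · rintro (rfl | ⟨p', rfl, t, ht, hp⟩ | ⟨s, ⟨t, ht, hst⟩, hp⟩)
    · exact IsRootTrace.isTrace ⟨_, List.mem_singleton_self _, .single l cs⟩
    · exact IsRootTrace.isTrace ⟨_, List.mem_singleton_self _, .cons l cs ht hp⟩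
    · exact ⟨s, ⟨_, List.mem_singleton_self _, .child l cs ht hst⟩, hp⟩

theorem isTrace_map_leaf {ls : List L} {p : List L}
    (h : IsTrace (ls.map fun l => LTree.node l []) p) : ∃ l ∈ ls, p = [l] := by
  obtain ⟨t, ht, htr⟩ := isTrace_iff_exists_mem.1 h
  obtain ⟨l, hl, rfl⟩ := List.mem_map.1 ht
  simp only [isTrace_node, not_isRootTrace_nil, not_isTrace_nil, and_false, exists_false,
    or_false] at htr
  exact ⟨l, hl, htr⟩

section Sum

variable {α β : Type}

theorem eq_nil_and_mem_of_isTrace_map_leaf_inr {bs : List β} {xs : List α} {b : β}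
    (h : IsTrace (bs.map fun b => LTree.node (Sum.inr b) []) (xs.map Sum.inl ++ [Sum.inr b])) :
    xs = [] ∧ b ∈ bs := by
  have h' : IsTrace ((bs.map Sum.inr).map fun l => LTree.node l [])
      (xs.map Sum.inl ++ [Sum.inr b]) := by
    rwa [List.map_map]
  obtain ⟨l, hl, hp⟩ := isTrace_map_leaf h'
  obtain ⟨b', hb', rfl⟩ := List.mem_map.1 hl
  cases xs with
  | nil => simp_all
  | cons => simp at hp

theorem isTrace_node_inl {a : α} {cs : LForest (α ⊕ β)} {xs : List α} {b : β}
    (h : IsTrace [.node (.inl a) cs] (xs.map Sum.inl ++ [Sum.inr b])) :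
    IsTrace cs (xs.map Sum.inl ++ [Sum.inr b]) ∨
      ∃ xs', xs = a :: xs' ∧ IsTrace cs (xs'.map Sum.inl ++ [Sum.inr b]) := by
  rcases isTrace_node.1 h with hp | ⟨p', hp, hcs⟩ | hcs
  · cases xs <;> simp at hp
  · cases xs with
    | nil => simp at hp
    | cons a' xs' =>
      simp only [List.map_cons, List.cons_append, List.cons.injEq, Sum.inl.injEq] at hp
      exact .inr ⟨xs', hp.1 ▸ rfl, hp.2 ▸ hcs.isTrace⟩
  · exact .inl hcs

end Sum

end Forest

section Select

variable {T : Type} {X X' : List (Name × Ty T)} {As : List (Proc T)} {L : List ℕ}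

theorem getD_map_getD {i : ℕ} (hi : i < L.length) :
    (L.map (As.getD · .nil)).getD i .nil = As.getD (L.getD i 0) .nil := by
  rw [List.getD_eq_getElem _ _ (by simpa using hi), List.getElem_map,
    List.getD_eq_getElem _ _ hi]

theorem fnAt_map_getD {i : ℕ} (hi : i < L.length) :
    fnAt (L.map (As.getD · .nil)) i = fnAt As (L.getD i 0) :=
  congrArg Proc.fn (getD_map_getD hi)

theorem getD_mem_of_lt {i : ℕ} (hi : i < L.length) : L.getD i 0 ∈ L := by
  rw [List.getD_eq_getElem _ _ hi]
  exact List.getElem_mem hi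

theorem Linked.of_select (hL : ∀ k ∈ L, k < As.length) (hX : namesOf X' ⊆ namesOf X)
    {a b : ℕ} (h : Linked X' (L.map (As.getD · .nil)) a b) :
    Linked X As (L.getD a 0) (L.getD b 0) := by
  obtain ⟨ha, hb, y, hya, hyb, hyX⟩ := h
  rw [List.length_map] at ha hb
  exact ⟨hL _ (getD_mem_of_lt ha), hL _ (getD_mem_of_lt hb), y,
    fnAt_map_getD ha ▸ hya, fnAt_map_getD hb ▸ hyb, hX hyX⟩

theorem Tied.of_select (hL : ∀ k ∈ L, k < As.length) (hX : namesOf X' ⊆ namesOf X)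
    {a b : ℕ} (h : Tied X' (L.map (As.getD · .nil)) a b) :
    Tied X As (L.getD a 0) (L.getD b 0) := by
  induction h with
  | single h => exact .single (h.of_select hL hX)
  | tail _ h ih => exact ih.tail (h.of_select hL hX)

theorem Tied.lt_length {a b : ℕ} (h : Tied X As a b) : a < As.length := by
  induction h with
  | single h => exact h.1
  | tail _ _ ih => exact ih

theorem NameTied.of_select (hL : ∀ k ∈ L, k < As.length) (hX : namesOf X' ⊆ namesOf X)
    {y : Name} {i : ℕ} (h : NameTied X' (L.map (As.getD · .nil)) y i) :
    NameTied X As y (L.getD i 0) := by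
  obtain ⟨j, hyj, hji⟩ := h
  have hj : j < L.length := by simpa using hji.lt_length
  exact ⟨L.getD j 0, fnAt_map_getD hj ▸ hyj, hji.of_select hL hX⟩

/-- Passes the invariant of `Φ_𝒯` from the recursive call on `νX'.∏_{k ∈ L} A_k` to `νX.∏ As`. -/
theorem exists_nameTied_of_select (hL : ∀ k ∈ L, k < As.length) (hX : namesOf X' ⊆ namesOf X)
    {xs : List (Name × T)} {A : Proc T}
    (h : ∃ j, j < (L.map (As.getD · .nil)).length ∧ (L.map (As.getD · .nil)).getD j .nil = A ∧
      ∀ xt ∈ xs, NameTied X' (L.map (As.getD · .nil)) xt.1 j) :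
    ∃ k ∈ L, As.getD k .nil = A ∧ ∀ xt ∈ xs, NameTied X As xt.1 k := by
  obtain ⟨j, hj, hjA, hxs⟩ := h
  rw [List.length_map] at hj
  refine ⟨L.getD j 0, ?_, ?_, fun xt hxt => (hxs xt hxt).of_select hL hX⟩
  · exact getD_mem_of_lt hj
  · rw [← getD_map_getD hj, hjA]

end Select

section PhiRec

variable {T : Type}

open scoped Classical

-- The lists `I_x`, `Y_x`, `R` and `Z` of the recursive clause of `Φ_𝒯`, named as in `PhiAux`.
noncomputable def tiedIdx (X : List (Name × Ty T)) (As : List (Proc T))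
    (xτ : Name × Ty T) : List ℕ :=
  (List.range As.length).filter (fun i => decide (NameTied X As xτ.1 i))

noncomputable def tiedRestr (step : T → T → Prop) (X : List (Name × Ty T))
    (As : List (Proc T)) (xτ : Name × Ty T) : List (Name × Ty T) :=
  X.filter (fun yτ => decide ((∃ i ∈ tiedIdx X As xτ, yτ.1 ∈ fnAt As i) ∧ yτ ∉ minT step X))

noncomputable def untiedIdx (step : T → T → Prop) (X : List (Name × Ty T))
    (As : List (Proc T)) : List ℕ :=
  (List.range As.length).filter
    (fun i => decide (∀ xτ ∈ minT step X, ¬ NameTied X As xτ.1 i))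

noncomputable def untiedRestr (step : T → T → Prop) (X : List (Name × Ty T))
    (As : List (Proc T)) : List (Name × Ty T) :=
  X.filter (fun yτ => decide (yτ ∉ minT step X ∧ ∀ xτ ∈ minT step X, yτ ∉ tiedRestr step X As xτ))

theorem phiAux_succ (step : T → T → Prop) (fuel : ℕ) (X : List (Name × Ty T))
    (As : List (Proc T)) (hX : ¬ X.isEmpty) :
    PhiAux step (fuel + 1) X As =
      (minT step X).map (fun xτ => LTree.node (.inl (xτ.1, xτ.2.baseOf))
        (PhiAux step fuel (tiedRestr step X As xτ)
          ((tiedIdx X As xτ).map (As.getD · .nil))))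
      ++ PhiAux step fuel (untiedRestr step X As)
          ((untiedIdx step X As).map (As.getD · .nil)) := by
  rw [PhiAux, if_neg hX]
  rfl

theorem namesOf_tiedRestr_subset (step : T → T → Prop) (X : List (Name × Ty T))
    (As : List (Proc T)) (xτ : Name × Ty T) :
    namesOf (tiedRestr step X As xτ) ⊆ namesOf X :=
  (List.filter_sublist.map _).subset

theorem namesOf_untiedRestr_subset (step : T → T → Prop) (X : List (Name × Ty T))
    (As : List (Proc T)) : namesOf (untiedRestr step X As) ⊆ namesOf X :=
  (List.filter_sublist.map _).subset

end PhiRec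

theorem exists_nameTied_of_isTrace_leaves {T : Type} {X : List (Name × Ty T)}
    {As : List (Proc T)} {A : Proc T} {xs : List (Name × T)}
    (h : IsTrace (As.map fun B => LTree.node (Sum.inr B) []) (xs.map Sum.inl ++ [Sum.inr A])) :
    ∃ j, j < As.length ∧ As.getD j .nil = A ∧ ∀ xt ∈ xs, NameTied X As xt.1 j := by
  obtain ⟨rfl, hA⟩ := eq_nil_and_mem_of_isTrace_map_leaf_inr h
  obtain ⟨j, hj, rfl⟩ := List.getElem_of_mem hA
  exact ⟨j, hj, List.getD_eq_getElem _ _ hj, by simp⟩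

theorem trace_phiAux_nameTied {T : Type} (step : T → T → Prop) (fuel : ℕ)
    (X : List (Name × Ty T)) (As : List (Proc T)) (xs : List (Name × T)) (A : Proc T)
    (ht : IsTrace (PhiAux step fuel X As) (xs.map Sum.inl ++ [Sum.inr A])) :
    ∃ j, j < As.length ∧ As.getD j .nil = A ∧ ∀ xt ∈ xs, NameTied X As xt.1 j := by
  induction fuel generalizing X As xs with
  | zero => exact exists_nameTied_of_isTrace_leaves ht
  | succ fuel ih =>
    by_cases hX : X.isEmpty
    · rw [PhiAux, if_pos hX] at ht
      exact exists_nameTied_of_isTrace_leaves ht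
    rw [phiAux_succ step fuel X As hX, isTrace_append] at ht
    rcases ht with ht | ht
    · obtain ⟨_, hx, htx⟩ := isTrace_iff_exists_mem.1 ht
      obtain ⟨xτ, hxτ, rfl⟩ := List.mem_map.1 hx
      have hI : ∀ k ∈ tiedIdx X As xτ, k < As.length ∧ NameTied X As xτ.1 k := by
        intro k hk
        simpa [tiedIdx] using hk
      have hY := namesOf_tiedRestr_subset step X As xτ
      rcases isTrace_node_inl htx with htr | ⟨xs', rfl, htr⟩
      · obtain ⟨k, hk, hkA, hxs⟩ :=
          exists_nameTied_of_select (fun k hk => (hI k hk).1) hY (ih _ _ _ htr)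
        exact ⟨k, (hI k hk).1, hkA, hxs⟩
      · obtain ⟨k, hk, hkA, hxs⟩ :=
          exists_nameTied_of_select (fun k hk => (hI k hk).1) hY (ih _ _ _ htr)
        refine ⟨k, (hI k hk).1, hkA, ?_⟩
        rintro xt (_ | ⟨_, hxt⟩)
        exacts [(hI k hk).2, hxs xt hxt]
    · have hR : ∀ k ∈ untiedIdx step X As, k < As.length := by
        intro k hk
        simpa [untiedIdx] using (List.mem_filter.1 hk).1
      obtain ⟨k, hk, hkA, hxs⟩ :=
        exists_nameTied_of_select hR (namesOf_untiedRestr_subset step X As) (ih _ _ _ ht)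
      exact ⟨k, hR k hk, hkA, hxs⟩

/-- Lemma 3.6: every name on a trace of `Φ_𝒯(P)` ending at a
leaf `A_j` is tied to `A_j` in `P`. -/
theorem phi_trace_tied {T : Type} [Fintype T] (step : T → T → Prop)
    (hT : IsForestRel step)
    (X : List (Name × Ty T)) (As : List (Proc T))
    (hNF : NormalForm (nuList X (parList As)))
    (hc : TCompat (blt step) (nuList X (parList As)))
    (xs : List (Name × T)) (A : Proc T)
    (ht : IsTrace (Phi step X As) (xs.map Sum.inl ++ [Sum.inr A])) :
    ∃ j, j < As.length ∧ As.getD j .nil = A ∧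
      ∀ xt ∈ xs, NameTied X As xt.1 j :=
  trace_phiAux_nameTied step X.length X As xs A ht

end PiCalc
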